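/- arXiv:1705.06456 — 4 statements merged into one kernel-verified Lean document; each statement's English description precedes it below -/
import Mathlib

section
/- Let F be a field, let a ≥ 1, and let B be the a×a companion matrix of a monic polynomial of degree a over F (i.e., B has entry 1 in positions (i+1, i) for 1 ≤ i ≤ a−1, arbitrary entries k_0, …, k_{a−1} in the last column, and 0 elsewhere). If Z is an a×a matrix over F satisfying Bᵀ·Z = Z·B, then Z is symmetric (Zᵀ = Z). -/
/-- The `a × a` companion-type matrix with entry `1` in positions `(i+1, i)`
for `1 ≤ i ≤ a - 1`, last column given by `k`, and `0` elsewhere. -/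
def companionMat {a : ℕ} (F : Type*) [Field F] (k : Fin a → F) :
    Matrix (Fin a) (Fin a) F :=
  fun i j => if (j : ℕ) = a - 1 then k i else if (i : ℕ) = (j : ℕ) + 1 then 1 else 0

/-- The key entrywise consequence of `Bᵀ * Z = Z * B`: away from the last
row/column, `Z (p+1) q = Z p (q+1)`. -/
lemma companion_step (a : ℕ) (F : Type*) [Field F] (k : Fin a → F)
    (Z : Matrix (Fin a) (Fin a) F)
    (hZ : (companionMat F k).transpose * Z = Z * companionMat F k)
    (p q : ℕ) (hp : p + 1 < a) (hq : q + 1 < a) :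
    Z ⟨p+1, hp⟩ ⟨q, Nat.lt_of_succ_lt hq⟩ = Z ⟨p, Nat.lt_of_succ_lt hp⟩ ⟨q+1, hq⟩ := by
  have h := congrFun (congrFun hZ ⟨p, Nat.lt_of_succ_lt hp⟩) ⟨q, Nat.lt_of_succ_lt hq⟩
  have hpne : p ≠ a - 1 := by omega
  have hqne : q ≠ a - 1 := by omega
  simp only [Matrix.mul_apply, Matrix.transpose_apply, companionMat, hpne, hqne,
    if_false, ite_mul, mul_ite, one_mul, mul_one, zero_mul, mul_zero] at h
  have e1 : ∀ x : Fin a, ((x:ℕ) = p + 1) ↔ (x = ⟨p+1, hp⟩) := fun x => by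
    simp [Fin.ext_iff]
  have e2 : ∀ x : Fin a, ((x:ℕ) = q + 1) ↔ (x = ⟨q+1, hq⟩) := fun x => by
    simp [Fin.ext_iff]
  simp only [e1, e2, Finset.sum_ite_eq', Finset.mem_univ, if_true] at h
  exact h

/-- If `B` is an `a × a` companion matrix over a field `F` and `Z` satisfies
`Bᵀ * Z = Z * B`, then `Z` is symmetric. -/
theorem symmetric_of_transpose_companion_comm
    (a : ℕ) (ha : 1 ≤ a) (F : Type*) [Field F] (k : Fin a → F)
    (Z : Matrix (Fin a) (Fin a) F)
    (hZ : (companionMat F k).transpose * Z = Z * companionMat F k) :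
    Z.transpose = Z := by
  have aux : ∀ d : ℕ, ∀ p q : ℕ, ∀ hp : p < a, ∀ hq : q < a, p + d = q →
      Z ⟨p, hp⟩ ⟨q, hq⟩ = Z ⟨q, hq⟩ ⟨p, hp⟩ := by
    intro d
    induction d using Nat.strong_induction_on with
    | _ d ih =>
      intro p q hp hq hpq
      match d with
      | 0 =>
        have : p = q := by omega
        subst this; rfl
      | 1 =>
        subst hpq
        exact (companion_step a F k Z hZ p p hq hq).symm
      | (e+2) =>
        subst hpq
        have h1 : p + 1 < a := by omega
        have h2 : (p + e + 1) + 1 < a := by omega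
        have s1 := companion_step a F k Z hZ p (p+e+1) h1 h2
        have s2 := companion_step a F k Z hZ (p+e+1) p h2 h1
        have i1 := ih e (by omega) (p+1) (p+e+1) (by omega) (by omega) (by omega)
        exact s1.symm.trans (i1.trans s2.symm)
  ext i j
  rw [Matrix.transpose_apply]
  rcases le_total (i:ℕ) (j:ℕ) with h | h
  · have := aux ((j:ℕ) - i) i j i.2 j.2 (by omega)
    simpa using this.symm
  · have := aux ((i:ℕ) - j) j i j.2 i.2 (by omega)
    simpa using this
end

section
/- Let G be a finite group. If H and K are subgroups of G with m_G(H) = m_G(K) = m*(G), then m_G(H ⊔ K) = m*(G) and m_G(H ⊓ K) = m*(G); that is, the set CD(G) = {H ≤ G : m_G(H) = m*(G)} is closed under subgroup join and intersection, and hence forms a sublattice of the lattice of subgroups of G. -/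
/-- The Chermak–Delgado measure of a subgroup `H` of `G`: `|H| * |C_G(H)|`. -/
noncomputable def cdMeasure (G : Type*) [Group G] (H : Subgroup G) : ℕ :=
  Nat.card H * Nat.card (Subgroup.centralizer (H : Set G))

/-- The maximal Chermak–Delgado measure of `G`. -/
noncomputable def cdMax (G : Type*) [Group G] : ℕ :=
  sSup (Set.range (cdMeasure G))

/-- The Chermak–Delgado lattice of `G`, as the set of subgroups attaining
the maximal Chermak–Delgado measure. -/
def CD (G : Type*) [Group G] : Set (Subgroup G) :=
  {H : Subgroup G | cdMeasure G H = cdMax G}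

/-! For any subgroups of a finite group, `|H| |K| ≤ |H ⊔ K| |H ⊓ K|`. Applying this to `H, K` and to
`C(H), C(K)`, and using `C(H ⊔ K) = C(H) ⊓ C(K)` and `C(H) ⊔ C(K) ≤ C(H ⊓ K)`, gives
`m(H) m(K) ≤ m(H ⊔ K) m(H ⊓ K)`. When `m(H) = m(K) = m*`, the right-hand side is a product of two
numbers at most `m*` that is at least `m*²`, so both factors equal `m*`. -/

namespace Subgroup

variable {G : Type*} [Group G]

theorem centralizer_sup (H K : Subgroup G) :
    centralizer ((H ⊔ K : Subgroup G) : Set G) = centralizer H ⊓ centralizer K := by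
  rw [sup_eq_closure, centralizer_closure]
  exact SetLike.coe_injective Set.centralizer_union

theorem centralizer_sup_centralizer_le_centralizer_inf (H K : Subgroup G) :
    centralizer (H : Set G) ⊔ centralizer K ≤ centralizer ((H ⊓ K : Subgroup G) : Set G) :=
  sup_le (centralizer_le inf_le_left) (centralizer_le inf_le_right)

theorem card_mul_card_le_card_sup_mul_card_inf [Finite G] (H K : Subgroup G) :
    Nat.card H * Nat.card K ≤ Nat.card (H ⊔ K : Subgroup G) * Nat.card (H ⊓ K : Subgroup G) := by
  have hK : Nat.card K = Nat.card (H ⊓ K : Subgroup G) * H.relIndex K := by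
    rw [← inf_relIndex_right, ← relIndex_bot_left, ← relIndex_bot_left,
      relIndex_mul_relIndex _ _ _ bot_le inf_le_right]
  have hHK : Nat.card (H ⊔ K : Subgroup G) = Nat.card H * H.relIndex (H ⊔ K) := by
    rw [← relIndex_bot_left, ← relIndex_bot_left, relIndex_mul_relIndex _ _ _ bot_le le_sup_left]
  have hrel : H.relIndex K ≤ H.relIndex (H ⊔ K) :=
    relIndex_le_of_le_right le_sup_right (index_ne_zero_of_finite (H := H.subgroupOf _))
  calc Nat.card H * Nat.card K
      = Nat.card H * Nat.card (H ⊓ K : Subgroup G) * H.relIndex K := by rw [hK, mul_assoc]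
    _ ≤ Nat.card H * Nat.card (H ⊓ K : Subgroup G) * H.relIndex (H ⊔ K) := by gcongr
    _ = Nat.card (H ⊔ K : Subgroup G) * Nat.card (H ⊓ K : Subgroup G) := by
      rw [hHK, mul_right_comm]

end Subgroup

theorem Nat.eq_and_eq_of_le_of_le_of_mul_le {a b m : ℕ} (ha : a ≤ m) (hb : b ≤ m)
    (h : m * m ≤ a * b) : a = m ∧ b = m := by
  constructor <;> nlinarith

section ChermakDelgado

open Subgroup

variable {G : Type*} [Group G]

theorem cdMeasure_le_cdMax [Finite G] (L : Subgroup G) : cdMeasure G L ≤ cdMax G :=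
  le_csSup (Set.finite_range _).bddAbove ⟨L, rfl⟩

theorem cdMeasure_mul_cdMeasure_le [Finite G] (H K : Subgroup G) :
    cdMeasure G H * cdMeasure G K ≤ cdMeasure G (H ⊔ K) * cdMeasure G (H ⊓ K) := by
  set CH := centralizer (H : Set G)
  set CK := centralizer (K : Set G)
  calc cdMeasure G H * cdMeasure G K
      = (Nat.card H * Nat.card K) * (Nat.card CH * Nat.card CK) := by
        rw [cdMeasure, cdMeasure]; ring
    _ ≤ (Nat.card (H ⊔ K : Subgroup G) * Nat.card (H ⊓ K : Subgroup G)) *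
          (Nat.card (CH ⊔ CK : Subgroup G) * Nat.card (CH ⊓ CK : Subgroup G)) :=
        Nat.mul_le_mul (card_mul_card_le_card_sup_mul_card_inf H K)
          (card_mul_card_le_card_sup_mul_card_inf CH CK)
    _ ≤ (Nat.card (H ⊔ K : Subgroup G) * Nat.card (H ⊓ K : Subgroup G)) *
          (Nat.card (centralizer ((H ⊓ K : Subgroup G) : Set G)) *
            Nat.card (CH ⊓ CK : Subgroup G)) := by
        gcongr
        exact card_le_of_le (centralizer_sup_centralizer_le_centralizer_inf H K)
    _ = cdMeasure G (H ⊔ K) * cdMeasure G (H ⊓ K) := by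
        rw [cdMeasure, cdMeasure, centralizer_sup]; ring

end ChermakDelgado

/-- For a finite group `G`, if subgroups `H` and `K` both attain the maximal
Chermak–Delgado measure, then so do `H ⊔ K` and `H ⊓ K`; i.e. the Chermak–Delgado
lattice is closed under join and intersection. -/
theorem CD_closed_sup_inf
    (G : Type*) [Group G] [Fintype G] (H K : Subgroup G)
    (hH : cdMeasure G H = cdMax G) (hK : cdMeasure G K = cdMax G) :
    cdMeasure G (H ⊔ K) = cdMax G ∧ cdMeasure G (H ⊓ K) = cdMax G :=
  Nat.eq_and_eq_of_le_of_le_of_mul_le (cdMeasure_le_cdMax _) (cdMeasure_le_cdMax _)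
    (by simpa only [hH, hK] using cdMeasure_mul_cdMeasure_le H K)
end

section
/- Let G be a finite group and let H, K be subgroups of G with m_G(H) = m_G(K) = m*(G). Then the subgroup generated by H and K coincides with the set product HK; that is, the underlying set of H ⊔ K equals {h·k : h ∈ H, k ∈ K}. -/
open Pointwise

/-- Key counting lemma: `|A| * |B| ≤ |A ⊓ B| * |A * B|`. -/
lemma aux_card_mul_le {G : Type*} [Group G] [Fintype G] (A B : Subgroup G) :
    Nat.card A * Nat.card B ≤
      Nat.card (A ⊓ B : Subgroup G) * Nat.card ((A : Set G) * (B : Set G) : Set G) := by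
  classical
  rw [← Nat.card_prod, ← Nat.card_prod]
  have hmem : ∀ x : ((A : Set G) * (B : Set G) : Set G),
      ∃ p : A × B, (p.1 : G) * (p.2 : G) = (x : G) := by
    rintro ⟨x, hx⟩
    obtain ⟨a, ha, b, hb, rfl⟩ := Set.mem_mul.mp hx
    exact ⟨(⟨a, ha⟩, ⟨b, hb⟩), rfl⟩
  choose sec hsec using hmem
  have hBmem : ∀ p : A × B,
      ((sec ⟨(p.1 : G) * p.2, Set.mul_mem_mul p.1.2 p.2.2⟩).1 : G)⁻¹ * p.1 ∈ A ⊓ B := by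
    intro p
    set x : ((A : Set G) * (B : Set G) : Set G) :=
      ⟨(p.1 : G) * p.2, Set.mul_mem_mul p.1.2 p.2.2⟩ with hxdef
    have h := hsec x
    have key : ((sec x).1 : G)⁻¹ * p.1 = ((sec x).2 : G) * (p.2 : G)⁻¹ := by
      rw [inv_mul_eq_iff_eq_mul, ← mul_assoc, h]
      simp [hxdef, mul_assoc]
    refine ⟨A.mul_mem (A.inv_mem (sec x).1.2) p.1.2, ?_⟩
    rw [key]
    exact B.mul_mem (sec x).2.2 (B.inv_mem p.2.2)
  set f : A × B → (↥(A ⊓ B)) × ((A : Set G) * (B : Set G) : Set G) := fun p =>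
    (⟨((sec ⟨(p.1 : G) * p.2, Set.mul_mem_mul p.1.2 p.2.2⟩).1 : G)⁻¹ * p.1, hBmem p⟩,
      ⟨(p.1 : G) * p.2, Set.mul_mem_mul p.1.2 p.2.2⟩) with hfdef
  apply Nat.card_le_card_of_injective f
  rintro ⟨a₁, b₁⟩ ⟨a₂, b₂⟩ hf
  have h2 : ((f (a₁, b₁)).2 : G) = ((f (a₂, b₂)).2 : G) := by rw [hf]
  have h1 : ((f (a₁, b₁)).1 : G) = ((f (a₂, b₂)).1 : G) := by rw [hf]
  simp only [hfdef] at h1 h2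
  have hx : (⟨(a₁ : G) * b₁, Set.mul_mem_mul a₁.2 b₁.2⟩ :
      ((A : Set G) * (B : Set G) : Set G)) = ⟨(a₂ : G) * b₂, Set.mul_mem_mul a₂.2 b₂.2⟩ :=
    Subtype.ext h2
  rw [hx] at h1
  have ha : (a₁ : G) = a₂ := mul_left_cancel h1
  have hb : (b₁ : G) = b₂ := by
    have := h2
    rw [ha] at this
    exact mul_left_cancel this
  exact Prod.ext (Subtype.ext ha) (Subtype.ext hb)

lemma aux_centralizer_sup {G : Type*} [Group G] (H K : Subgroup G) :
    Subgroup.centralizer ((H ⊔ K : Subgroup G) : Set G) =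
      Subgroup.centralizer (H : Set G) ⊓ Subgroup.centralizer (K : Set G) := by
  ext g
  simp only [Subgroup.mem_inf, Subgroup.mem_centralizer_iff]
  constructor
  · intro h
    exact ⟨fun x hx => h x ((le_sup_left : H ≤ H ⊔ K) hx),
      fun x hx => h x ((le_sup_right : K ≤ H ⊔ K) hx)⟩
  · rintro ⟨h1, h2⟩ x hx
    have hle : H ⊔ K ≤ Subgroup.centralizer {g} :=
      sup_le (fun y hy => Subgroup.mem_centralizer_singleton_iff.mpr (h1 y hy))
        (fun y hy => Subgroup.mem_centralizer_singleton_iff.mpr (h2 y hy))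
    exact Subgroup.mem_centralizer_singleton_iff.mp (hle hx)

lemma aux_le_cdMax {G : Type*} [Group G] [Fintype G] (L : Subgroup G) :
    cdMeasure G L ≤ cdMax G :=
  le_csSup (Set.Finite.bddAbove (Set.finite_range _)) ⟨L, rfl⟩

/-- For a finite group `G`, if subgroups `H` and `K` both attain the maximal
Chermak–Delgado measure, then the subgroup generated by `H` and `K` coincides, as a
set, with the set product `H * K = {h * k : h ∈ H, k ∈ K}`. -/
theorem CD_sup_eq_mul
    (G : Type*) [Group G] [Fintype G] (H K : Subgroup G)
    (hH : cdMeasure G H = cdMax G) (hK : cdMeasure G K = cdMax G) :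
    ((H ⊔ K : Subgroup G) : Set G) = (H : Set G) * (K : Set G) := by
  classical
  set m := cdMax G with hm
  have hmpos : 0 < m := by
    rw [← hH]
    unfold cdMeasure
    exact Nat.mul_pos Nat.card_pos Nat.card_pos
  have hCLpos : 0 < Nat.card (Subgroup.centralizer ((H ⊔ K : Subgroup G) : Set G)) :=
    Nat.card_pos
  -- set product is inside the sup
  have hsub : (H : Set G) * (K : Set G) ⊆ ((H ⊔ K : Subgroup G) : Set G) := by
    rintro x hx
    obtain ⟨a, ha, b, hb, rfl⟩ := Set.mem_mul.mp hx
    exact mul_mem ((le_sup_left : H ≤ H ⊔ K) ha) ((le_sup_right : K ≤ H ⊔ K) hb)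
  -- centralizer product inclusion
  have hCsub : (Subgroup.centralizer (H : Set G) : Set G) *
      (Subgroup.centralizer (K : Set G) : Set G) ⊆
      (Subgroup.centralizer ((H ⊓ K : Subgroup G) : Set G) : Set G) := by
    rintro x hx
    obtain ⟨c, hc, d, hd, rfl⟩ := Set.mem_mul.mp hx
    have hc' : c ∈ Subgroup.centralizer ((H ⊓ K : Subgroup G) : Set G) :=
      Subgroup.centralizer_le (SetLike.coe_subset_coe.mpr inf_le_left) hc
    have hd' : d ∈ Subgroup.centralizer ((H ⊓ K : Subgroup G) : Set G) :=
      Subgroup.centralizer_le (SetLike.coe_subset_coe.mpr inf_le_right) hd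
    exact mul_mem hc' hd'
  -- main inequality for the H, K pair
  have e1 : Nat.card H * Nat.card K ≤
      Nat.card (H ⊓ K : Subgroup G) * Nat.card ((H : Set G) * (K : Set G) : Set G) :=
    aux_card_mul_le H K
  have e2 : Nat.card (Subgroup.centralizer (H : Set G)) *
      Nat.card (Subgroup.centralizer (K : Set G)) ≤
      Nat.card (Subgroup.centralizer ((H ⊔ K : Subgroup G) : Set G)) *
      Nat.card (Subgroup.centralizer ((H ⊓ K : Subgroup G) : Set G)) := by
    calc Nat.card (Subgroup.centralizer (H : Set G)) *
        Nat.card (Subgroup.centralizer (K : Set G)) ≤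
        Nat.card (Subgroup.centralizer (H : Set G) ⊓ Subgroup.centralizer (K : Set G) :
          Subgroup G) *
        Nat.card ((Subgroup.centralizer (H : Set G) : Set G) *
          (Subgroup.centralizer (K : Set G) : Set G) : Set G) :=
        aux_card_mul_le _ _
      _ ≤ Nat.card (Subgroup.centralizer ((H ⊔ K : Subgroup G) : Set G)) *
          Nat.card (Subgroup.centralizer ((H ⊓ K : Subgroup G) : Set G)) := by
        rw [← aux_centralizer_sup]
        exact Nat.mul_le_mul_left _ (Nat.card_mono (Set.toFinite _) hCsub)
  have chain : m * m ≤ m * (Nat.card ((H : Set G) * (K : Set G) : Set G) *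
      Nat.card (Subgroup.centralizer ((H ⊔ K : Subgroup G) : Set G))) := by
    calc m * m = cdMeasure G H * cdMeasure G K := by rw [hH, hK]
      _ = (Nat.card H * Nat.card K) *
          (Nat.card (Subgroup.centralizer (H : Set G)) *
            Nat.card (Subgroup.centralizer (K : Set G))) := by
          unfold cdMeasure; ring
      _ ≤ (Nat.card (H ⊓ K : Subgroup G) *
            Nat.card ((H : Set G) * (K : Set G) : Set G)) *
          (Nat.card (Subgroup.centralizer ((H ⊔ K : Subgroup G) : Set G)) *
            Nat.card (Subgroup.centralizer ((H ⊓ K : Subgroup G) : Set G))) :=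
        Nat.mul_le_mul e1 e2
      _ = cdMeasure G (H ⊓ K) * (Nat.card ((H : Set G) * (K : Set G) : Set G) *
            Nat.card (Subgroup.centralizer ((H ⊔ K : Subgroup G) : Set G))) := by
          unfold cdMeasure; ring
      _ ≤ m * (Nat.card ((H : Set G) * (K : Set G) : Set G) *
            Nat.card (Subgroup.centralizer ((H ⊔ K : Subgroup G) : Set G))) :=
        Nat.mul_le_mul_right _ (aux_le_cdMax _)
  have hm_le : m ≤ Nat.card ((H : Set G) * (K : Set G) : Set G) *
      Nat.card (Subgroup.centralizer ((H ⊔ K : Subgroup G) : Set G)) :=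
    Nat.le_of_mul_le_mul_left chain hmpos
  have hsup_le : Nat.card (H ⊔ K : Subgroup G) *
      Nat.card (Subgroup.centralizer ((H ⊔ K : Subgroup G) : Set G)) ≤ m :=
    aux_le_cdMax (H ⊔ K)
  have hcard : Nat.card (H ⊔ K : Subgroup G) ≤
      Nat.card ((H : Set G) * (K : Set G) : Set G) :=
    Nat.le_of_mul_le_mul_right (le_trans hsup_le hm_le) hCLpos
  have hcard' : (((H ⊔ K : Subgroup G) : Set G)).ncard ≤
      ((H : Set G) * (K : Set G)).ncard := by
    rw [← Nat.card_coe_set_eq, ← Nat.card_coe_set_eq]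
    exact hcard
  exact (Set.eq_of_subset_of_ncard_le hsub hcard' (Set.toFinite _)).symm
end

section
/- Let G be a finite group and H a subgroup with m_G(H) = m*(G). Then the centralizer C_G(H) also satisfies m_G(C_G(H)) = m*(G), and moreover C_G(C_G(H)) = H. -/
theorem cdMeasure_le_cdMax_s13 (G : Type*) [Group G] [Fintype G] (K : Subgroup G) :
    cdMeasure G K ≤ cdMax G := by
  apply le_csSup
  · refine ⟨Nat.card G * Nat.card G, ?_⟩
    rintro _ ⟨L, rfl⟩
    exact Nat.mul_le_mul (Nat.card_le_card_of_injective _ L.subtype_injective)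
      (Nat.card_le_card_of_injective _ (Subgroup.centralizer (L : Set G)).subtype_injective)
  · exact ⟨K, rfl⟩

/-- For a finite group `G`, if a subgroup `H` attains the maximal Chermak–Delgado
measure, then so does its centralizer `C_G(H)`, and moreover `C_G(C_G(H)) = H`. -/
theorem CD_centralizer
    (G : Type*) [Group G] [Fintype G] (H : Subgroup G)
    (hH : cdMeasure G H = cdMax G) :
    cdMeasure G (Subgroup.centralizer (H : Set G)) = cdMax G ∧
    Subgroup.centralizer ((Subgroup.centralizer (H : Set G) : Subgroup G) : Set G) = H := by
  set C := Subgroup.centralizer (H : Set G)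
  have hle : H ≤ Subgroup.centralizer (C : Set G) := Subgroup.le_centralizer_iff.mpr le_rfl
  have hcard : Nat.card H ≤ Nat.card (Subgroup.centralizer (C : Set G)) :=
    Subgroup.card_le_of_le hle
  have hge : cdMax G ≤ cdMeasure G C := by
    calc cdMax G = cdMeasure G H := hH.symm
    _ = Nat.card C * Nat.card H := by rw [cdMeasure, mul_comm]
    _ ≤ Nat.card C * Nat.card (Subgroup.centralizer (C : Set G)) :=
        Nat.mul_le_mul_left _ hcard
    _ = cdMeasure G C := rfl
  have heq : cdMeasure G C = cdMax G := le_antisymm (cdMeasure_le_cdMax_s13 G C) hge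
  refine ⟨heq, ?_⟩
  have hCpos : 0 < Nat.card C := Nat.card_pos
  have hcard' : Nat.card (Subgroup.centralizer (C : Set G)) ≤ Nat.card H := by
    by_contra hlt
    push_neg at hlt
    have : cdMax G < cdMeasure G C := by
      calc cdMax G = Nat.card C * Nat.card H := by rw [← hH, cdMeasure, mul_comm]
      _ < Nat.card C * Nat.card (Subgroup.centralizer (C : Set G)) :=
          (Nat.mul_lt_mul_left hCpos).mpr hlt
      _ = cdMeasure G C := rfl
    exact absurd heq (Nat.ne_of_gt this)
  exact (Subgroup.eq_of_le_of_card_ge hle hcard').symm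
end
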